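/- arXiv:1910.04752 — 3 statements merged into one kernel-verified Lean document; each statement's English description precedes it below -/
import Mathlib

section
/- For all natural numbers p, q ≥ 0, the integral ∫₀¹ (x-1)^p (1+x)^q dx equals (-1)^p · (q! · p!)/((q+p+1)!) · Σ_{j=0}^{q} C(q+p+1, j). -/
/-!
Differentiating `(x - 1)^(p+1) (1 + x)^(q+1)` and integrating over `[0, 1]` (the boundary term
vanishes at `x = 1`) gives `(p + 1) I(p, q + 1) + (q + 1) I(p + 1, q) = (-1)^p`. This determines
`I(p, q)` by induction on `q` from `I(p, 0) = (-1)^p / (p + 1)`, and the closed form satisfies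
the same recursion because the two binomial sums differ by the single term `C(p + q + 2, q + 1)`,
which cancels against `(p + 1)! (q + 1)! / (p + q + 2)!`.
-/

open Finset intervalIntegral Nat

noncomputable def binomialTailWeight (p q : ℕ) : ℝ :=
  ((q ! * p ! : ℕ) : ℝ) / ((q + p + 1)! : ℝ) * ∑ j ∈ range (q + 1), ((q + p + 1).choose j : ℝ)

lemma binomialTailWeight_zero_right (p : ℕ) : binomialTailWeight p 0 = 1 / (p + 1) := by
  simp only [binomialTailWeight, zero_add, range_one, sum_singleton, choose_zero_right,
    factorial_zero, one_mul, factorial_succ, cast_mul, cast_add, cast_one, mul_one]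
  field_simp

lemma binomialTailWeight_recursion (p q : ℕ) :
    (p + 1) * binomialTailWeight p (q + 1) - (q + 1) * binomialTailWeight (p + 1) q = 1 := by
  have hn : q + 1 + p + 1 = (p + 1) + (q + 1) := by omega
  have hn' : q + (p + 1) + 1 = (p + 1) + (q + 1) := by omega
  have hchoose : (((p + 1) + (q + 1)).choose (q + 1) : ℝ) * (p + 1)! * (q + 1)!
      = ((p + 1) + (q + 1))! := by
    exact_mod_cast add_choose_mul_factorial_mul_factorial (p + 1) (q + 1)
  have hfac : (((p + 1) + (q + 1))! : ℝ) ≠ 0 := by positivity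
  simp only [binomialTailWeight, hn, hn', sum_range_succ _ (q + 1)]
  rw [factorial_succ q, factorial_succ p] at hchoose ⊢
  push_cast at hchoose ⊢
  field_simp
  linear_combination hchoose

lemma integral_sub_one_pow (p : ℕ) : ∫ x in (0 : ℝ)..1, (x - 1) ^ p = (-1) ^ p / (p + 1) := by
  rw [integral_comp_sub_right (· ^ p), integral_pow]
  norm_num [pow_succ]

lemma integral_sub_one_pow_mul_one_add_pow_recursion (p q : ℕ) :
    (p + 1) * (∫ x in (0 : ℝ)..1, (x - 1) ^ p * (1 + x) ^ (q + 1))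
      + (q + 1) * (∫ x in (0 : ℝ)..1, (x - 1) ^ (p + 1) * (1 + x) ^ q) = (-1) ^ p := by
  have hu : ∀ x ∈ Set.uIcc (0 : ℝ) 1,
      HasDerivAt (fun x : ℝ => (x - 1) ^ (p + 1)) ((p + 1) * (x - 1) ^ p) x := fun x _ => by
    simpa using ((hasDerivAt_id x).sub_const 1).fun_pow (p + 1)
  have hv : ∀ x ∈ Set.uIcc (0 : ℝ) 1,
      HasDerivAt (fun x : ℝ => (1 + x) ^ (q + 1)) ((q + 1) * (1 + x) ^ q) x := fun x _ => by
    simpa using ((hasDerivAt_id x).const_add 1).fun_pow (q + 1)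
  have hibp := integral_deriv_mul_eq_sub hu hv
    (Continuous.intervalIntegrable (by fun_prop) _ _)
    (Continuous.intervalIntegrable (by fun_prop) _ _)
  rw [integral_add (Continuous.intervalIntegrable (by fun_prop) _ _)
    (Continuous.intervalIntegrable (by fun_prop) _ _)] at hibp
  simp only [mul_assoc, mul_left_comm _ ((q : ℝ) + 1), integral_const_mul] at hibp
  rw [hibp]
  norm_num [pow_succ]

lemma integral_sub_one_pow_mul_one_add_pow_eq (p q : ℕ) :
    ∫ x in (0 : ℝ)..1, (x - 1) ^ p * (1 + x) ^ q = (-1) ^ p * binomialTailWeight p q := by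
  induction q generalizing p with
  | zero => simp [integral_sub_one_pow, binomialTailWeight_zero_right, div_eq_mul_inv]
  | succ q ih =>
    have hrec := integral_sub_one_pow_mul_one_add_pow_recursion p q
    have hw := binomialTailWeight_recursion p q
    rw [ih (p + 1)] at hrec
    have hp : (p : ℝ) + 1 ≠ 0 := by positivity
    apply mul_left_cancel₀ hp
    linear_combination hrec - (-1) ^ p * hw

/-- Evaluation of `∫₀¹ (x-1)^p (1+x)^q dx` in terms of binomial sums. -/
theorem integral_x_sub_one_pow_mul_one_add_pow (p q : ℕ) :
    (∫ x in (0:ℝ)..1, (x - 1) ^ p * (1 + x) ^ q) =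
      (-1 : ℝ) ^ p * ((q.factorial * p.factorial : ℕ) : ℝ) / ((q + p + 1).factorial : ℝ) *
        ∑ j ∈ Finset.range (q + 1), ((q + p + 1).choose j : ℝ) := by
  rw [integral_sub_one_pow_mul_one_add_pow_eq, binomialTailWeight]
  ring
end

section
/- Let n⁺, n⁻ be positive even natural numbers, m := (n⁺+n⁻)/2. Then the expression ((-1)^m (m-1)!)/((n⁺/2-1)!(n⁻/2-1)!) · Σ_{l=0}^{m-2} [(±1)^{m-l-1}/(m-l-1)] · Σ_{l⁺+l⁻=l, 0≤l^±≤n^±/2-1} (-1)^{l⁺} C(n⁺/2-1, l⁺) C(n⁻/2-1, l⁻) equals ±(-1)^{n⁻/2-1} Σ_{j=0}^{n∓/2-1} C(m-1, j), where the upper signs are taken together and the lower signs together, and n∓ means n⁻ for the upper sign and n⁺ for the lower sign. -/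
/-!
Put `a = n⁺/2 - 1`, `b = n⁻/2 - 1` and `N = a + b + 1 = m - 1`. The inner sum is the coefficient
of `X ^ l` in `(1 - X) ^ a * (1 + X) ^ b`. Exchanging the order of summation turns the sum over `l`
into `∑ j, C(b, j) ∑ i, (-1) ^ i C(a, i) / (N - j - i)`, and the inner alternating sum is a Beta
integral: `∑ i, (-1) ^ i C(a, i) / (d + i + 1) = ∫₀¹ t ^ d (1 - t) ^ a dt = a! d! / (a + d + 1)!`.
Since `C(b, j) (b - j)! / (N - j)! = b! C(N, j) / N!`, everything collapses to
`(-1) ^ a a! b! / N! * ∑_{j ≤ b} C(N, j)`. For the lower sign, the extra factor `(-1) ^ (N - l)`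
is absorbed by exchanging the two factors of the generating polynomial, which reduces it to the
upper sign with `a` and `b` swapped.
-/

open Finset Nat

theorem neg_one_pow_sub_of_le {R : Type*} [CommRing R] {m n : ℕ} (h : m ≤ n) :
    (-1 : R) ^ (n - m) = (-1) ^ n * (-1) ^ m := by
  rw [← pow_sub_mul_pow (-1 : R) h, mul_assoc, ← mul_pow, neg_one_mul, neg_neg, one_pow, mul_one]

theorem sum_range_diag_eq_sum_range_sum_range {M : Type*} [AddCommMonoid M] {a b n : ℕ}
    (h : a + b < n) (F : ℕ → ℕ → M) (hFa : ∀ i j, a < i → F i j = 0)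
    (hFb : ∀ i j, b < j → F i j = 0) :
    ∑ l ∈ range n, ∑ i ∈ range (l + 1), F i (l - i) =
      ∑ i ∈ range (a + 1), ∑ j ∈ range (b + 1), F i j := by
  rw [sum_range_diag_flip, ← sum_subset (range_subset_range.mpr (show a + 1 ≤ n by omega))]
  · refine sum_congr rfl fun i hi => (sum_subset (range_subset_range.mpr ?_) fun j _ hj => ?_).symm
    · have := mem_range.mp hi; omega
    · exact hFb i j (by simpa using hj)
  · exact fun i _ hi => sum_eq_zero fun j _ => hFa i j (by simpa using hi)

variable (R : Type*) [CommRing R]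

/-- The coefficient of `X ^ l` in `(1 - X) ^ a * (1 + X) ^ b`. -/
def signedVandermonde (a b l : ℕ) : R :=
  ∑ i ∈ range (l + 1), (-1) ^ i * (a.choose i : R) * (b.choose (l - i) : R)

variable {R} in
theorem signedVandermonde_comm (a b l : ℕ) :
    signedVandermonde R a b l = (-1) ^ l * signedVandermonde R b a l := by
  rw [signedVandermonde, signedVandermonde, ← sum_range_reflect, mul_sum]
  refine sum_congr rfl fun i hi => ?_
  have hil : i ≤ l := Nat.lt_succ_iff.mp (mem_range.mp hi)
  rw [Nat.add_sub_cancel, Nat.sub_sub_self hil, neg_one_pow_sub_of_le hil]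
  ring

variable {K : Type*} [Field K] [CharZero K]

theorem alternating_sum_range_choose_div (a d : ℕ) :
    ∑ i ∈ range (a + 1), (a.choose i : K) * ((-1) ^ i / (d + i + 1)) =
      a ! * d ! / (d + a + 1)! := by
  induction a generalizing d with
  | zero =>
    have : (d ! : K) ≠ 0 := by exact_mod_cast factorial_ne_zero d
    simp [Nat.factorial_succ]
    field_simp
  | succ a ih =>
    have pascal := sum_choose_succ_mul (R := K) (fun i _ => (-1) ^ i / (d + i + 1 : K)) a
    calc ∑ i ∈ range (a + 1 + 1), ((a + 1).choose i : K) * ((-1) ^ i / (d + i + 1))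
        = ∑ i ∈ range (a + 1), (a.choose i : K) * ((-1) ^ i / (d + i + 1)) -
            ∑ i ∈ range (a + 1), (a.choose i : K) * ((-1) ^ i / ((d + 1 : ℕ) + i + 1)) := by
          rw [pascal, sub_eq_add_neg, ← sum_neg_distrib]
          congr 1
          refine sum_congr rfl fun i _ => ?_
          push_cast
          ring
      _ = (a + 1)! * d ! / (d + (a + 1) + 1)! := by
          rw [ih, ih, show d + 1 + a + 1 = d + a + 1 + 1 by ring,
            show d + (a + 1) + 1 = d + a + 1 + 1 by ring, factorial_succ (d + a + 1),
            factorial_succ d, factorial_succ a]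
          have : ((d + a + 1)! : K) ≠ 0 := by exact_mod_cast factorial_ne_zero _
          have : (d + a + 1 + 1 : K) ≠ 0 := by exact_mod_cast succ_ne_zero (d + a + 1)
          push_cast
          field_simp
          ring

theorem alternating_sum_range_choose_div_sub (a c : ℕ) :
    ∑ i ∈ range (a + 1), (a.choose i : K) * ((-1) ^ i / ((a + c + 1 - i : ℕ) : K)) =
      (-1) ^ a * a ! * c ! / (a + c + 1)! := by
  rw [← sum_range_reflect]
  have reflect : ∀ i ∈ range (a + 1),
      (a.choose (a + 1 - 1 - i) : K) *
          ((-1) ^ (a + 1 - 1 - i) / ((a + c + 1 - (a + 1 - 1 - i) : ℕ) : K)) =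
        (-1) ^ a * ((a.choose i : K) * ((-1) ^ i / (c + i + 1))) := by
    intro i hi
    have hia : i ≤ a := Nat.lt_succ_iff.mp (mem_range.mp hi)
    rw [Nat.add_sub_cancel, Nat.choose_symm hia, show a + c + 1 - (a - i) = c + i + 1 by omega,
      neg_one_pow_sub_of_le hia]
    push_cast
    ring
  rw [sum_congr rfl reflect, ← mul_sum, alternating_sum_range_choose_div, add_comm c a]
  ring

theorem sum_range_signedVandermonde_div (a b : ℕ) :
    ∑ l ∈ range (a + b + 1), signedVandermonde K a b l / ((a + b + 1 - l : ℕ) : K) =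
      (-1) ^ a * a ! * b ! / (a + b + 1)! * ∑ j ∈ range (b + 1), ((a + b + 1).choose j : K) := by
  set F : ℕ → ℕ → K := fun i j =>
    (-1) ^ i * (a.choose i : K) * (b.choose j : K) / ((a + b + 1 - (i + j) : ℕ) : K)
  calc ∑ l ∈ range (a + b + 1), signedVandermonde K a b l / ((a + b + 1 - l : ℕ) : K)
      = ∑ l ∈ range (a + b + 1), ∑ i ∈ range (l + 1), F i (l - i) := by
        refine sum_congr rfl fun l _ => ?_
        rw [signedVandermonde, sum_div]
        refine sum_congr rfl fun i hi => ?_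
        simp only [F, Nat.add_sub_cancel' (Nat.lt_succ_iff.mp (mem_range.mp hi))]
    _ = ∑ i ∈ range (a + 1), ∑ j ∈ range (b + 1), F i j :=
        sum_range_diag_eq_sum_range_sum_range (by omega) F
          (fun i j h => by simp [F, choose_eq_zero_of_lt h])
          (fun i j h => by simp [F, choose_eq_zero_of_lt h])
    _ = ∑ j ∈ range (b + 1), (b.choose j : K) * ∑ i ∈ range (a + 1),
          (a.choose i : K) * ((-1) ^ i / ((a + (b - j) + 1 - i : ℕ) : K)) := by
        rw [sum_comm]
        refine sum_congr rfl fun j hj => ?_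
        rw [mul_sum]
        refine sum_congr rfl fun i _ => ?_
        have hjb : j ≤ b := Nat.lt_succ_iff.mp (mem_range.mp hj)
        simp only [F, show a + b + 1 - (i + j) = a + (b - j) + 1 - i by omega]
        ring
    _ = ∑ j ∈ range (b + 1), (-1) ^ a * a ! * b ! / (a + b + 1)! * ((a + b + 1).choose j : K) := by
        refine sum_congr rfl fun j hj => ?_
        have hjb : j ≤ b := Nat.lt_succ_iff.mp (mem_range.mp hj)
        rw [alternating_sum_range_choose_div_sub, show a + (b - j) + 1 = a + b + 1 - j by omega,
          cast_choose K hjb, cast_choose K (show j ≤ a + b + 1 by omega)]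
        have : ((a + b + 1 - j)! : K) ≠ 0 := by exact_mod_cast factorial_ne_zero _
        have : ((a + b + 1)! : K) ≠ 0 := by exact_mod_cast factorial_ne_zero _
        have : ((b - j)! : K) ≠ 0 := by exact_mod_cast factorial_ne_zero _
        have : (j ! : K) ≠ 0 := by exact_mod_cast factorial_ne_zero _
        field_simp
    _ = _ := (mul_sum ..).symm

theorem sum_range_neg_one_pow_mul_signedVandermonde_div (a b : ℕ) :
    ∑ l ∈ range (a + b + 1),
        (-1) ^ (a + b + 1 - l) / ((a + b + 1 - l : ℕ) : K) * signedVandermonde K a b l =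
      -((-1) ^ a * a ! * b ! / (a + b + 1)! * ∑ j ∈ range (a + 1), ((a + b + 1).choose j : K)) := by
  calc ∑ l ∈ range (a + b + 1),
        (-1) ^ (a + b + 1 - l) / ((a + b + 1 - l : ℕ) : K) * signedVandermonde K a b l
      = (-1) ^ (a + b + 1) *
          ∑ l ∈ range (a + b + 1), signedVandermonde K b a l / ((a + b + 1 - l : ℕ) : K) := by
        rw [mul_sum]
        refine sum_congr rfl fun l hl => ?_
        rw [signedVandermonde_comm, ← pow_sub_mul_pow (-1 : K) (mem_range.mp hl).le]
        ring
    _ = (-1) ^ (a + b + 1) * ((-1) ^ b * b ! * a ! / (a + b + 1)! *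
          ∑ j ∈ range (a + 1), ((a + b + 1).choose j : K)) := by
        rw [add_comm a b, sum_range_signedVandermonde_div]
    _ = _ := by
        linear_combination (-(-1) ^ a * b ! * a ! / (a + b + 1)! *
          ∑ j ∈ range (a + 1), ((a + b + 1).choose j : K)) *
            pow_mul_pow_eq_one b (by norm_num : (-1 : K) * -1 = 1)

/-- Simplification of the constants `N_F^±` in the asymptotic expansion of the Witten
integral: formula (eq:Nvalues0) equals formula (eq:Nvalues), for both choices of sign. -/
theorem N_pm_simplification (np nm m : ℕ) (hnp : 0 < np) (hnm : 0 < nm)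
    (hep : Even np) (hem : Even nm) (hm : m = (np + nm) / 2) :
    ((((-1 : ℝ) ^ m * ((m - 1).factorial : ℝ)) /
        (((np / 2 - 1).factorial : ℝ) * ((nm / 2 - 1).factorial : ℝ))) *
      ∑ l ∈ Finset.range (m - 1),
        ((1 : ℝ) ^ (m - l - 1) / ((m - l - 1 : ℕ) : ℝ)) *
          ∑ i ∈ Finset.range (l + 1),
            (-1 : ℝ) ^ i * ((np / 2 - 1).choose i : ℝ) * ((nm / 2 - 1).choose (l - i) : ℝ) =
      (-1 : ℝ) ^ (nm / 2 - 1) * ∑ j ∈ Finset.range (nm / 2), ((m - 1).choose j : ℝ)) ∧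
    ((((-1 : ℝ) ^ m * ((m - 1).factorial : ℝ)) /
        (((np / 2 - 1).factorial : ℝ) * ((nm / 2 - 1).factorial : ℝ))) *
      ∑ l ∈ Finset.range (m - 1),
        ((-1 : ℝ) ^ (m - l - 1) / ((m - l - 1 : ℕ) : ℝ)) *
          ∑ i ∈ Finset.range (l + 1),
            (-1 : ℝ) ^ i * ((np / 2 - 1).choose i : ℝ) * ((nm / 2 - 1).choose (l - i) : ℝ) =
      -((-1 : ℝ) ^ (nm / 2 - 1) * ∑ j ∈ Finset.range (np / 2), ((m - 1).choose j : ℝ))) := by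
  obtain ⟨a, rfl⟩ : ∃ a, np = 2 * a + 2 := ⟨np / 2 - 1, by obtain ⟨p, rfl⟩ := hep; omega⟩
  obtain ⟨b, rfl⟩ : ∃ b, nm = 2 * b + 2 := ⟨nm / 2 - 1, by obtain ⟨q, rfl⟩ := hem; omega⟩
  obtain rfl : m = a + b + 2 := by omega
  simp only [show (2 * a + 2) / 2 = a + 1 by omega, show (2 * b + 2) / 2 = b + 1 by omega,
    show a + b + 2 - 1 = a + b + 1 by omega, show ∀ l, a + b + 2 - l - 1 = a + b + 1 - l by omega,
    Nat.add_sub_cancel, one_pow, one_div, inv_mul_eq_div, ← signedVandermonde.eq_1,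
    sum_range_signedVandermonde_div, sum_range_neg_one_pow_mul_signedVandermonde_div]
  have cancel : ∀ S : ℝ, (-1) ^ (a + b + 2) * ((a + b + 1)! : ℝ) / (a ! * b !) *
      ((-1) ^ a * a ! * b ! / (a + b + 1)! * S) = (-1) ^ b * S := by
    intro S
    have : ((a + b + 1)! : ℝ) ≠ 0 := by exact_mod_cast factorial_ne_zero _
    have : (a ! : ℝ) ≠ 0 := by exact_mod_cast factorial_ne_zero _
    have : (b ! : ℝ) ≠ 0 := by exact_mod_cast factorial_ne_zero _
    field_simp
    linear_combination (-1) ^ b * S * pow_mul_pow_eq_one a (by norm_num : (-1 : ℝ) * -1 = 1)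
  exact ⟨cancel _, by rw [mul_neg, cancel]⟩
end

section
/- Let N ∈ ℕ₀, ζ ∈ ℝ, S ∈ C_c^∞(ℝ²), and define F^+(v) := ∫_{v-ζ}^∞ t^N S((t-v+ζ)/2, (t+v-ζ)/2) dt. Then for every m ∈ ℕ₀ there exists a constant C (depending on m, N, and finitely many sup-norms of derivatives of S up to order m) such that |F^{+(m)}(v)| ≤ (1 + |v-ζ|^N) · C for all v, ζ ∈ ℝ. -/
open MeasureTheory

/-- The basic destratified integral, as a function of `u = v - ζ`. -/
noncomputable def destratG (N : ℕ) (S : ℝ × ℝ → ℝ) : ℝ → ℝ :=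
  fun u => ∫ t in Set.Ioi u, t ^ N * S ((t - u) / 2, (t + u) / 2)

lemma destratG_eq_conv (N : ℕ) (S : ℝ × ℝ → ℝ) (u : ℝ) :
    destratG N S u =
      convolution (Set.indicator (Set.Ioi (0:ℝ)) (fun _ => (1:ℝ)))
        ((fun p y : ℝ => (p - y) ^ N * S (-y / 2, p - y / 2)) u)
        (ContinuousLinearMap.mul ℝ ℝ) volume 0 := by
  have h1 : destratG N S u
      = ∫ s in Set.Ioi (0:ℝ), (s + u) ^ N * S (s / 2, u + s / 2) := by
    rw [destratG]
    have hpre : (fun x : ℝ => x + u) ⁻¹' Set.Ioi u = Set.Ioi 0 := by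
      ext x; simp
    rw [← (measurePreserving_add_right volume u).setIntegral_preimage_emb
      (measurableEmbedding_addRight u)
      (fun t => t ^ N * S ((t - u) / 2, (t + u) / 2)) (Set.Ioi u), hpre]
    refine setIntegral_congr_fun measurableSet_Ioi (fun x _ => ?_)
    have e1 : (x + u - u) / 2 = x / 2 := by ring
    have e2 : (x + u + u) / 2 = u + x / 2 := by ring
    rw [e1, e2]
  have h2 : convolution (Set.indicator (Set.Ioi (0:ℝ)) (fun _ => (1:ℝ)))
        ((fun p y : ℝ => (p - y) ^ N * S (-y / 2, p - y / 2)) u)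
        (ContinuousLinearMap.mul ℝ ℝ) volume 0
      = ∫ s in Set.Ioi (0:ℝ), (s + u) ^ N * S (s / 2, u + s / 2) := by
    rw [convolution]
    have : ∀ t : ℝ,
        (ContinuousLinearMap.mul ℝ ℝ) (Set.indicator (Set.Ioi (0:ℝ)) (fun _ => (1:ℝ)) t)
          ((fun p y : ℝ => (p - y) ^ N * S (-y / 2, p - y / 2)) u (0 - t))
        = Set.indicator (Set.Ioi (0:ℝ))
            (fun s => (s + u) ^ N * S (s / 2, u + s / 2)) t := by
      intro t
      simp only [ContinuousLinearMap.mul_apply', Set.indicator_apply]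
      by_cases ht : t ∈ Set.Ioi (0:ℝ)
      · simp only [ht, if_true, one_mul]
        have e0 : u - (0 - t) = t + u := by ring
        have e1 : -(0 - t) / 2 = t / 2 := by ring
        have e2 : u - (0 - t) / 2 = u + t / 2 := by ring
        rw [e0, e1, e2]
      · simp [ht]
    simp only [this]
    rw [integral_indicator measurableSet_Ioi]
  rw [h1, h2]

lemma destratG_contDiff (N : ℕ) (S : ℝ × ℝ → ℝ)
    (hS : ContDiff ℝ (⊤ : ℕ∞) S) (hsupp : HasCompactSupport S) :
    ContDiff ℝ (⊤ : ℕ∞) (destratG N S) := by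
  obtain ⟨R, hR⟩ := hsupp.isCompact.isBounded.subset_closedBall 0
  set g : ℝ → ℝ → ℝ := fun p y => (p - y) ^ N * S (-y / 2, p - y / 2) with hg
  have hgs : ∀ p x : ℝ, p ∈ (Set.univ : Set ℝ) → x ∉ Metric.closedBall (0:ℝ) (2 * R) →
      g p x = 0 := by
    intro p x _ hx
    have hx' : ¬ |x| ≤ 2 * R := by
      simpa [Real.dist_eq] using hx
    have hnot : (-x / 2, p - x / 2) ∉ tsupport S := by
      intro hmem
      have := hR hmem
      have hle : ‖(-x / 2, p - x / 2)‖ ≤ R := by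
        simpa [Real.dist_eq] using this
      have h' : |x| / 2 ≤ ‖(-x / 2, p - x / 2)‖ := by
        simpa [Real.norm_eq_abs] using norm_fst_le ((-x / 2, p - x / 2) : ℝ × ℝ)
      have : |x| / 2 ≤ R := le_trans h' hle
      exact hx' (by linarith)
    rw [hg]
    simp [image_eq_zero_of_notMem_tsupport hnot]
  have hloc : LocallyIntegrable (Set.indicator (Set.Ioi (0:ℝ)) (fun _ => (1:ℝ))) volume :=
    (locallyIntegrable_const (1:ℝ)).indicator measurableSet_Ioi
  have hgc : ContDiffOn ℝ ((⊤ : ℕ∞) : WithTop ℕ∞) (↿g)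
      ((Set.univ : Set ℝ) ×ˢ (Set.univ : Set ℝ)) := by
    apply ContDiff.contDiffOn
    have hS' : ContDiff ℝ ((⊤ : ℕ∞) : WithTop ℕ∞) S := hS.of_le (by simp)
    have : ContDiff ℝ ((⊤ : ℕ∞) : WithTop ℕ∞)
        (fun q : ℝ × ℝ => (q.1 - q.2) ^ N * S (-q.2 / 2, q.1 - q.2 / 2)) := by
      refine ContDiff.mul ((contDiff_fst.sub contDiff_snd).pow N) ?_
      exact hS'.comp (((contDiff_snd.neg).div_const 2).prodMk
        (contDiff_fst.sub (contDiff_snd.div_const 2)))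
    exact this
  have key := contDiffOn_convolution_right_with_param (μ := volume)
    (ContinuousLinearMap.mul ℝ ℝ) isOpen_univ (isCompact_closedBall (0:ℝ) (2 * R))
    hgs hloc hgc
  rw [Set.univ_prod_univ, contDiffOn_univ] at key
  have : ContDiff ℝ ((⊤ : ℕ∞) : WithTop ℕ∞) (fun u : ℝ =>
      convolution (Set.indicator (Set.Ioi (0:ℝ)) (fun _ => (1:ℝ))) (g u)
        (ContinuousLinearMap.mul ℝ ℝ) volume 0) :=
    key.comp (contDiff_id.prodMk contDiff_const)
  have heq : destratG N S = fun u : ℝ =>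
      convolution (Set.indicator (Set.Ioi (0:ℝ)) (fun _ => (1:ℝ))) (g u)
        (ContinuousLinearMap.mul ℝ ℝ) volume 0 := by
    funext u; exact destratG_eq_conv N S u
  rw [heq]
  exact this

lemma destratG_hasCompactSupport (N : ℕ) (S : ℝ × ℝ → ℝ)
    (hsupp : HasCompactSupport S) :
    HasCompactSupport (destratG N S) := by
  obtain ⟨R, hR⟩ := hsupp.isCompact.isBounded.subset_closedBall 0
  apply HasCompactSupport.intro (isCompact_closedBall (0:ℝ) (2 * R))
  intro u hu
  have hu' : ¬ |u| ≤ 2 * R := by simpa [Real.dist_eq] using hu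
  have : ∀ t : ℝ, t ^ N * S ((t - u) / 2, (t + u) / 2) = 0 := by
    intro t
    have hnot : ((t - u) / 2, (t + u) / 2) ∉ tsupport S := by
      intro hmem
      have hle : ‖((t - u) / 2, (t + u) / 2)‖ ≤ R := by
        simpa [Real.dist_eq] using hR hmem
      have h1 : |t - u| / 2 ≤ ‖((t - u) / 2, (t + u) / 2)‖ := by
        simpa [Real.norm_eq_abs] using norm_fst_le (((t - u) / 2, (t + u) / 2) : ℝ × ℝ)
      have h2 : |t + u| / 2 ≤ ‖((t - u) / 2, (t + u) / 2)‖ := by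
        simpa [Real.norm_eq_abs] using norm_snd_le (((t - u) / 2, (t + u) / 2) : ℝ × ℝ)
      have : |u| ≤ 2 * R := by
        have habs : |u| ≤ |t + u| / 2 + |t - u| / 2 := by
          have e : u = (t + u) / 2 - (t - u) / 2 := by ring
          calc |u| = |(t + u) / 2 - (t - u) / 2| := by rw [← e]
            _ ≤ |(t + u) / 2| + |(t - u) / 2| := abs_sub _ _
            _ = |t + u| / 2 + |t - u| / 2 := by rw [abs_div, abs_div, abs_two]
        linarith
      exact hu' this
    simp [image_eq_zero_of_notMem_tsupport hnot]
  rw [destratG]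
  simp only [this, integral_zero]

/-- Uniform bounds on all derivatives of the destratified integral `F⁺`. -/
theorem destratified_integral_deriv_bound (N : ℕ) (S : ℝ × ℝ → ℝ)
    (hS : ContDiff ℝ (⊤ : ℕ∞) S) (hsupp : HasCompactSupport S) (m : ℕ) :
    ∃ C : ℝ, ∀ ζ v : ℝ,
      |iteratedDeriv m (fun v : ℝ =>
          ∫ t in Set.Ioi (v - ζ), t ^ N * S ((t - v + ζ) / 2, (t + v - ζ) / 2)) v| ≤
        (1 + |v - ζ| ^ N) * C := by
  have hcd : ContDiff ℝ (⊤ : ℕ∞) (destratG N S) := destratG_contDiff N S hS hsupp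
  have hcs : HasCompactSupport (destratG N S) := destratG_hasCompactSupport N S hsupp
  have hcsm : HasCompactSupport (iteratedDeriv m (destratG N S)) := by
    induction m with
    | zero => simpa [iteratedDeriv_zero] using hcs
    | succ n ih => rw [iteratedDeriv_succ]; exact ih.deriv
  have hcont : Continuous (iteratedDeriv m (destratG N S)) :=
    hcd.continuous_iteratedDeriv m (by exact_mod_cast le_top)
  obtain ⟨C, hC⟩ := hcsm.exists_bound_of_continuous hcont
  refine ⟨C, fun ζ v => ?_⟩
  have hC0 : 0 ≤ C := le_trans (norm_nonneg _) (hC 0)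
  have hfun : (fun v : ℝ =>
      ∫ t in Set.Ioi (v - ζ), t ^ N * S ((t - v + ζ) / 2, (t + v - ζ) / 2))
      = fun v : ℝ => destratG N S (v + -ζ) := by
    funext w
    rw [destratG]
    have hset : Set.Ioi (w - ζ) = Set.Ioi (w + -ζ) := by rw [sub_eq_add_neg]
    rw [hset]
    refine setIntegral_congr_fun measurableSet_Ioi (fun t _ => ?_)
    have e1 : (t - w + ζ) / 2 = (t - (w + -ζ)) / 2 := by ring
    have e2 : (t + w - ζ) / 2 = (t + (w + -ζ)) / 2 := by ring
    rw [e1, e2]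
  rw [hfun, iteratedDeriv_comp_add_const m (destratG N S) (-ζ)]
  have hb : |iteratedDeriv m (destratG N S) (v + -ζ)| ≤ C := by
    simpa [Real.norm_eq_abs] using hC (v + -ζ)
  have h1 : (1:ℝ) ≤ 1 + |v - ζ| ^ N := by
    have := pow_nonneg (abs_nonneg (v - ζ)) N
    linarith
  calc |iteratedDeriv m (destratG N S) (v + -ζ)| ≤ C := hb
    _ = 1 * C := (one_mul C).symm
    _ ≤ (1 + |v - ζ| ^ N) * C := mul_le_mul_of_nonneg_right h1 hC0
end
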